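/- Let N be a rooted binary phylogenetic network on X, let A ⊆ X, and let v be a tree vertex of N with children c1 and c2. Suppose there exist leaves ℓ1, ℓ2 ∈ A such that ℓ1 is a descendant of c1, ℓ2 is a descendant of c2, and ℓ2 is not a descendant of c1. Then v is a vertex of the exhibited network N_A. -/

import Mathlib

open scoped Classical

/-- A directed graph with a finite vertex set and a multiset of arcs
(so that parallel arcs can be represented). -/
structure Digraph' (α : Type*) where
  V : Finset α
  E : Multiset (α × α)

namespace Digraph'

variable {α : Type*} [DecidableEq α]

/-- In-degree of a vertex. -/
noncomputable def inDeg (G : Digraph' α) (v : α) : ℕ :=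
  (G.E.filter (fun e => e.2 = v)).card

/-- Out-degree of a vertex. -/
noncomputable def outDeg (G : Digraph' α) (v : α) : ℕ :=
  (G.E.filter (fun e => e.1 = v)).card

/-- A (directed) path, given as its nonempty list of vertices. -/
def IsPath (G : Digraph' α) (p : List α) : Prop :=
  p ≠ [] ∧ (∀ v ∈ p, v ∈ G.V) ∧ p.Chain' (fun u v => (u, v) ∈ G.E)

/-- A directed path from `u` to `v`. -/
def PathFrom (G : Digraph' α) (u v : α) (p : List α) : Prop :=
  G.IsPath p ∧ p.head? = some u ∧ p.getLast? = some v

/-- There is a directed path from `u` to `v` (possibly trivial). -/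
def Reaches (G : Digraph' α) (u v : α) : Prop := ∃ p, G.PathFrom u v p

/-- Acyclicity: no arc whose head reaches its tail. -/
def Acyclic (G : Digraph' α) : Prop := ∀ e ∈ G.E, ¬ G.Reaches e.2 e.1

/-- `u` is a stable ancestor of `X'` (w.r.t. root `ρ`): every path from
`ρ` to each `x ∈ X'` traverses `u`. -/
def StableAncestor (G : Digraph' α) (ρ : α) (X' : Finset α) (u : α) : Prop :=
  ∀ x ∈ X', ∀ p, G.PathFrom ρ x p → u ∈ p

/-- `u` is a lowest stable ancestor of `X'`: it is a stable ancestor and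
no distinct stable ancestor of `X'` is a descendant of `u`. -/
def IsLowestSA (G : Digraph' α) (ρ : α) (X' : Finset α) (u : α) : Prop :=
  G.StableAncestor ρ X' u ∧
    ∀ v, G.StableAncestor ρ X' v → v ≠ u → ¬ G.Reaches u v

/-- Delete a vertex together with all incident arcs. -/
noncomputable def deleteVertex (G : Digraph' α) (w : α) : Digraph' α :=
  ⟨G.V.erase w, G.E.filter (fun e => e.1 ≠ w ∧ e.2 ≠ w)⟩

/-- `G'` is obtained from `G` by suppressing the in-degree-one
out-degree-one vertex `w` (replacing `(p,w)`, `(w,c)` by the arc `(p,c)`). -/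
def Suppress (G : Digraph' α) (w : α) (G' : Digraph' α) : Prop :=
  G.inDeg w = 1 ∧ G.outDeg w = 1 ∧
  ∃ p c, (p, w) ∈ G.E ∧ (w, c) ∈ G.E ∧
    G'.V = G.V.erase w ∧ G'.E = (G.deleteVertex w).E + {(p, c)}

/-- `G'` is obtained from `G` by deleting exactly one arc of a pair of
parallel arcs. -/
def DeleteParallel (G G' : Digraph' α) : Prop :=
  ∃ e : α × α, 2 ≤ G.E.count e ∧ G'.V = G.V ∧ G'.E = G.E.erase e

/-- One simplification step: suppress a degree-(1,1) vertex or delete a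
parallel arc. -/
def SimpStep (G G' : Digraph' α) : Prop :=
  (∃ w, G.Suppress w G') ∨ G.DeleteParallel G'

/-- `G'` is the full simplification of `G`. -/
def FullSimp (G G' : Digraph' α) : Prop :=
  Relation.ReflTransGen (SimpStep (α := α)) G G' ∧ ∀ G'', ¬ SimpStep G' G''

/-- The path graph of `G` on `A` (w.r.t. the vertex `r`): all vertices and
arcs lying on a directed path from `r` to a leaf in `A`. -/
noncomputable def pathGraph (G : Digraph' α) (r : α) (A : Finset α) : Digraph' α :=
  ⟨G.V.filter (fun v => ∃ x ∈ A, ∃ p, G.PathFrom r x p ∧ v ∈ p),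
   G.E.filter (fun e => ∃ x ∈ A, ∃ p, G.PathFrom r x p ∧ e ∈ p.zip p.tail)⟩

/-- Isomorphism of digraphs fixing every element of `A`. -/
def IsoOn (G1 G2 : Digraph' α) (A : Finset α) : Prop :=
  ∃ φ : α → α, Set.BijOn φ ↑G1.V ↑G2.V ∧ (∀ x ∈ A, φ x = x) ∧
    G2.E = G1.E.map (fun e => (φ e.1, φ e.2))

end Digraph'

/-- A rooted binary phylogenetic network on the leaf set `X`. -/
structure PhyloNet (α : Type*) where
  G : Digraph' α
  root : α
  X : Finset α
  root_mem : root ∈ G.V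
  wf : ∀ e ∈ G.E, e.1 ∈ G.V ∧ e.2 ∈ G.V
  noParallel : ∀ e : α × α, G.E.count e ≤ 1
  acyclic : G.Acyclic
  reach : ∀ v ∈ G.V, G.Reaches root v
  binary :
    (G.V = {root} ∧ G.E = 0 ∧ X = {root}) ∨
    (G.inDeg root = 0 ∧ G.outDeg root = 2 ∧
     (∀ x ∈ X, x ∈ G.V ∧ G.inDeg x = 1 ∧ G.outDeg x = 0) ∧
     (∀ v ∈ G.V, G.outDeg v = 0 → v ∈ X) ∧
     (∀ v ∈ G.V, v ≠ root → v ∉ X →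
       (G.inDeg v = 1 ∧ G.outDeg v = 2) ∨ (G.inDeg v = 2 ∧ G.outDeg v = 1)))

namespace PhyloNet

variable {α : Type*} [DecidableEq α]

/-- `N` is recoverable: the root is the only stable ancestor of `X`. -/
def Recoverable (N : PhyloNet α) : Prop :=
  ∀ v, N.G.StableAncestor N.root N.X v → v = N.root

/-- `{a, b}` is a cherry: two distinct leaves with a common parent. -/
def Cherry (N : PhyloNet α) (a b : α) : Prop :=
  a ∈ N.X ∧ b ∈ N.X ∧ a ≠ b ∧ ∃ p, (p, a) ∈ N.G.E ∧ (p, b) ∈ N.G.E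

/-- `(a, b)` is a reticulated cherry: leaves `a, b` whose parents `p_a, p_b`
satisfy that `(p_a, p_b)` is an arc and `p_b` is a reticulation. -/
def RetCherry (N : PhyloNet α) (a b : α) : Prop :=
  a ∈ N.X ∧ b ∈ N.X ∧ a ≠ b ∧
  ∃ pa pb, (pa, a) ∈ N.G.E ∧ (pb, b) ∈ N.G.E ∧ (pa, pb) ∈ N.G.E ∧
    N.G.inDeg pb = 2

/-- `N'` is obtained from `N` by reducing the leaf `b` of the cherry `{a, b}`:
delete `b` and its incident arc and suppress the resulting degree-two
vertex (or, if the common parent is the root, replace `N` by the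
single-vertex network on `a`). -/
def ReduceCherry (N : PhyloNet α) (a b : α) (N' : PhyloNet α) : Prop :=
  N.Cherry a b ∧ N'.X = N.X.erase b ∧
  ∃ p, (p, a) ∈ N.G.E ∧ (p, b) ∈ N.G.E ∧
    ((p = N.root ∧ N'.G.V = {a} ∧ N'.G.E = 0 ∧ N'.root = a) ∨
     (p ≠ N.root ∧ N'.root = N.root ∧ (N.G.deleteVertex b).Suppress p N'.G))

/-- `N'` is obtained from `N` by cutting the reticulated cherry `(a, b)`:
delete the reticulation arc `(p_a, p_b)` and suppress the two resulting
degree-two vertices. -/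
def CutRetCherry (N : PhyloNet α) (a b : α) (N' : PhyloNet α) : Prop :=
  a ∈ N.X ∧ b ∈ N.X ∧ a ≠ b ∧ N'.X = N.X ∧ N'.root = N.root ∧
  ∃ pa pb, (pa, a) ∈ N.G.E ∧ (pb, b) ∈ N.G.E ∧ (pa, pb) ∈ N.G.E ∧
    N.G.inDeg pb = 2 ∧
    ∃ G1 : Digraph' α, G1.V = N.G.V ∧ G1.E = N.G.E.erase (pa, pb) ∧
      ∃ G2 : Digraph' α, G1.Suppress pa G2 ∧ G2.Suppress pb N'.G

/-- One cherry-picking step: reduce a leaf of a cherry or cut a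
reticulated cherry. -/
def PickStep (N N' : PhyloNet α) : Prop :=
  (∃ a b, N.ReduceCherry a b N') ∨ (∃ a b, N.CutRetCherry a b N')

/-- `N` is an orchard network: some sequence of cherry-picking operations
reduces it to a single vertex. -/
def IsOrchard (N : PhyloNet α) : Prop :=
  ∃ M : PhyloNet α, Relation.ReflTransGen (PickStep (α := α)) N M ∧ M.G.V.card = 1

/-- `H` is the network exhibited by `N` on `A`: the full simplification of
the path graph of `N` on `A`, rooted at the lowest stable ancestor of `A`. -/
def Exhibits (N : PhyloNet α) (A : Finset α) (H : Digraph' α) : Prop :=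
  ∃ r, N.G.IsLowestSA N.root A r ∧ Digraph'.FullSimp (N.G.pathGraph r A) H

end PhyloNet

/-! The stable ancestor `r` of `A` lies above `v`: otherwise it would lie on a path from `c1` to
`ℓ1`, and `c1` would reach `ℓ2` through `r`. Hence the arcs `v → c1`, `v → c2` and paths from
`c1` to `ℓ1` and from `c2` to `ℓ2` all lie in the path graph. Throughout the simplification `v`
keeps a child reaching `ℓ1` but not `ℓ2` and a child reaching `ℓ2`: suppressing a vertex only
shortcuts paths, and deleting a parallel arc changes no adjacency. Two such children are
distinct, so `v` never has out-degree one and is never suppressed. -/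

theorem List.mem_zip_tail_of_eq_append {α : Type*} {l l₁ l₂ : List α} {a b : α}
    (h : l = l₁ ++ a :: b :: l₂) : (a, b) ∈ l.zip l.tail := by
  subst h
  induction l₁ with
  | nil => simp
  | cons x l₁ ih => cases l₁ <;> simp_all

theorem List.relationReflTransGen_of_isChain {α : Type*} {R : α → α → Prop} {l : List α}
    {a b : α} (hl : l.IsChain R) (ha : l.head? = some a) (hb : l.getLast? = some b) :
    Relation.ReflTransGen R a b := by
  obtain ⟨t, rfl⟩ := List.head?_eq_some_iff.mp ha
  exact List.relationReflTransGen_of_exists_isChain_cons t hl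
    (Option.some_injective _ ((List.getLast?_eq_some_getLast _).symm.trans hb))

open Relation

namespace Digraph'

variable {α : Type*}

def Adj (G : Digraph' α) (a b : α) : Prop := (a, b) ∈ G.E

variable {G : Digraph' α}

theorem PathFrom.reflTransGen {p : List α} {x y : α} (h : G.PathFrom x y p) :
    ReflTransGen G.Adj x y :=
  List.relationReflTransGen_of_isChain h.1.2.2 h.2.1 h.2.2

theorem PathFrom.mem_V_right {p : List α} {x y : α} (h : G.PathFrom x y p) : y ∈ G.V :=
  h.1.2.1 y (List.mem_of_getLast? h.2.2)

theorem pathFrom_singleton {x : α} (hx : x ∈ G.V) : G.PathFrom x x [x] :=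
  ⟨⟨List.cons_ne_nil _ _, by simpa using hx, List.isChain_singleton _⟩, rfl, rfl⟩

theorem PathFrom.append {p q : List α} {x u u' y : α} (hp : G.PathFrom x u p)
    (hq : G.PathFrom u' y q) (hu : G.Adj u u') : G.PathFrom x y (p ++ q) := by
  obtain ⟨⟨hp0, hpV, hpE⟩, hpx, hpu⟩ := hp
  obtain ⟨⟨hq0, hqV, hqE⟩, hqu, hqy⟩ := hq
  refine ⟨⟨by simp [hp0], ?_, ?_⟩, ?_, ?_⟩
  · simpa [or_imp, forall_and] using And.intro hpV hqV
  · refine List.isChain_append.mpr ⟨hpE, hqE, ?_⟩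
    simp only [hpu, hqu, Option.mem_def, Option.some.injEq]
    rintro _ rfl _ rfl
    exact hu
  · rw [List.head?_append, hpx]; rfl
  · rw [List.getLast?_append_of_ne_nil _ hq0, hqy]

theorem PathFrom.exists_pathFrom_of_mem_left {p : List α} {x y u : α} (h : G.PathFrom x y p)
    (hu : u ∈ p) : ∃ q, G.PathFrom x u q := by
  obtain ⟨s, t, rfl⟩ := List.append_of_mem hu
  obtain ⟨⟨-, hV, hE⟩, hx, -⟩ := h
  refine ⟨s ++ [u], ⟨by simp, fun w hw => hV w ?_, hE.prefix (by simp)⟩, ?_, by simp⟩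
  · simp only [List.mem_append, List.mem_cons] at hw ⊢; tauto
  · cases s <;> simpa using hx

theorem PathFrom.exists_pathFrom_of_mem_right {p : List α} {x y u : α} (h : G.PathFrom x y p)
    (hu : u ∈ p) : ∃ q, G.PathFrom u y q := by
  obtain ⟨s, t, rfl⟩ := List.append_of_mem hu
  obtain ⟨⟨-, hV, hE⟩, -, hy⟩ := h
  refine ⟨u :: t, ⟨by simp, fun w hw => hV w (by simp [hw]), hE.suffix (by simp)⟩, rfl, ?_⟩
  rwa [List.getLast?_append_of_ne_nil _ (List.cons_ne_nil _ _)] at hy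

theorem reaches_of_reflTransGen (hwf : ∀ e ∈ G.E, e.2 ∈ G.V) {x y : α} (hx : x ∈ G.V)
    (h : ReflTransGen G.Adj x y) : G.Reaches x y := by
  induction h with
  | refl => exact ⟨_, pathFrom_singleton hx⟩
  | tail _ hyz ih =>
    obtain ⟨p, hp⟩ := ih
    exact ⟨_, hp.append (pathFrom_singleton (hwf _ hyz)) hyz⟩

theorem StableAncestor.exists_pathFrom {ρ r v c ℓ ℓ' : α} {A : Finset α}
    (hr : G.StableAncestor ρ A r) (hv : G.Reaches ρ v) (hvc : G.Adj v c) (hℓ : ℓ ∈ A)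
    (hcℓ : G.Reaches c ℓ) (hℓ' : ℓ' ∈ A) (hℓ'reach : G.Reaches ρ ℓ')
    (hcℓ' : ¬ ReflTransGen G.Adj c ℓ') : ∃ p, G.PathFrom r v p := by
  obtain ⟨p, hp⟩ := hv
  obtain ⟨q, hq⟩ := hcℓ
  rcases List.mem_append.mp (hr ℓ hℓ _ (hp.append hq hvc)) with hrp | hrq
  · exact hp.exists_pathFrom_of_mem_right hrp
  · obtain ⟨p', hp'⟩ := hℓ'reach
    obtain ⟨s, hs⟩ := hp'.exists_pathFrom_of_mem_right (hr ℓ' hℓ' _ hp')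
    obtain ⟨t, ht⟩ := hq.exists_pathFrom_of_mem_left hrq
    exact absurd (ht.reflTransGen.trans hs.reflTransGen) hcℓ'

section PathGraph

variable {r : α} {A : Finset α}

theorem pathGraph_adj_le : (G.pathGraph r A).Adj ≤ G.Adj :=
  fun _ _ h => (Multiset.mem_filter.mp h).1

theorem PathFrom.mem_pathGraph_V {p : List α} {x u : α} (hp : G.PathFrom r x p) (hx : x ∈ A)
    (hu : u ∈ p) : u ∈ (G.pathGraph r A).V :=
  Finset.mem_filter.mpr ⟨hp.1.2.1 u hu, x, hx, p, hp, hu⟩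

theorem PathFrom.isChain_pathGraph {p : List α} {x : α} (hp : G.PathFrom r x p) (hx : x ∈ A) :
    p.IsChain (G.pathGraph r A).Adj :=
  List.isChain_iff_forall_rel_of_append_cons_cons.mpr fun _ _ _ _ hsplit =>
    Multiset.mem_filter.mpr
      ⟨List.isChain_iff_forall_rel_of_append_cons_cons.mp hp.1.2.2 hsplit,
        x, hx, p, hp, List.mem_zip_tail_of_eq_append hsplit⟩

theorem PathFrom.adj_pathGraph {p q : List α} {v c ℓ : α} (hp : G.PathFrom r v p)
    (hvc : G.Adj v c) (hq : G.PathFrom c ℓ q) (hℓ : ℓ ∈ A) :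
    (G.pathGraph r A).Adj v c ∧ ReflTransGen (G.pathGraph r A).Adj c ℓ := by
  obtain ⟨-, hchain, hlink⟩ := List.isChain_append.mp ((hp.append hq hvc).isChain_pathGraph hℓ)
  exact ⟨hlink v hp.2.2 c hq.2.1, List.relationReflTransGen_of_isChain hchain hq.2.1 hq.2.2⟩

end PathGraph

def ForksTo (G : Digraph' α) (v ℓ₁ ℓ₂ : α) : Prop :=
  ∃ a₁ a₂, G.Adj v a₁ ∧ G.Adj v a₂ ∧ ReflTransGen G.Adj a₁ ℓ₁ ∧ ReflTransGen G.Adj a₂ ℓ₂ ∧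
    ¬ ReflTransGen G.Adj a₁ ℓ₂

section Simplification

variable [DecidableEq α] {G' : Digraph' α} {w : α}

theorem eq_of_adj_of_inDeg_eq_one {a b : α} (hw : G.inDeg w = 1) (ha : G.Adj a w)
    (hb : G.Adj b w) : a = b := by
  obtain ⟨e, he⟩ := Multiset.card_eq_one.mp hw
  have ha' : (a, w) ∈ G.E.filter (fun e => e.2 = w) := Multiset.mem_filter.mpr ⟨ha, rfl⟩
  have hb' : (b, w) ∈ G.E.filter (fun e => e.2 = w) := Multiset.mem_filter.mpr ⟨hb, rfl⟩
  rw [he, Multiset.mem_singleton] at ha' hb'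
  exact congrArg Prod.fst (ha'.trans hb'.symm)

theorem eq_of_adj_of_outDeg_eq_one {a b : α} (hw : G.outDeg w = 1) (ha : G.Adj w a)
    (hb : G.Adj w b) : a = b := by
  obtain ⟨e, he⟩ := Multiset.card_eq_one.mp hw
  have ha' : (w, a) ∈ G.E.filter (fun e => e.1 = w) := Multiset.mem_filter.mpr ⟨ha, rfl⟩
  have hb' : (w, b) ∈ G.E.filter (fun e => e.1 = w) := Multiset.mem_filter.mpr ⟨hb, rfl⟩
  rw [he, Multiset.mem_singleton] at ha' hb'
  exact congrArg Prod.snd (ha'.trans hb'.symm)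

theorem ForksTo.outDeg_ne_one {v ℓ₁ ℓ₂ : α} (hf : G.ForksTo v ℓ₁ ℓ₂) : G.outDeg v ≠ 1 := by
  obtain ⟨a₁, a₂, h₁, h₂, -, hr₂, hn⟩ := hf
  exact fun hv => hn (eq_of_adj_of_outDeg_eq_one hv h₁ h₂ ▸ hr₂)

theorem Suppress.exists_adj_iff (h : G.Suppress w G') :
    ∃ p c, G.Adj p w ∧ G.Adj w c ∧
      ∀ a b, G'.Adj a b ↔ (G.Adj a b ∧ a ≠ w ∧ b ≠ w) ∨ (a = p ∧ b = c) := by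
  obtain ⟨-, -, p, c, hp, hc, -, hE⟩ := h
  exact ⟨p, c, hp, hc, fun a b => by simp [Adj, hE, deleteVertex, Multiset.mem_filter]⟩

theorem Suppress.transGen_of_adj (h : G.Suppress w G') {a b : α} (hab : G'.Adj a b) :
    TransGen G.Adj a b := by
  obtain ⟨p, c, hp, hc, hadj⟩ := h.exists_adj_iff
  rcases (hadj a b).mp hab with ⟨hab, -, -⟩ | ⟨rfl, rfl⟩
  · exact .single hab
  · exact .tail (.single hp) hc

theorem Suppress.reflTransGen_of_reflTransGen (h : G.Suppress w G') {a b : α}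
    (hab : ReflTransGen G'.Adj a b) : ReflTransGen G.Adj a b :=
  ReflTransGen.lift' id (fun _ _ hxy => (h.transGen_of_adj hxy).to_reflTransGen) _ _ hab

theorem Suppress.reflTransGen_of_ne (h : G.Suppress w G') (hw : ¬ G.Adj w w) {x y : α}
    (hx : x ≠ w) (hy : y ≠ w) (hxy : ReflTransGen G.Adj x y) : ReflTransGen G'.Adj x y := by
  obtain ⟨p, c, hp, hc, hadj⟩ := h.exists_adj_iff
  -- a path of `G` avoiding `w` at its ends maps to a path of `G'` by sending `w` to its parent
  let f : α → α := fun z => if z = w then p else z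
  have hf : G.Adj ≤ Function.onFun (ReflTransGen G'.Adj) f := by
    intro a b hab
    by_cases ha : a = w <;> by_cases hb : b = w
    · subst ha hb
      exact absurd hab hw
    · obtain rfl := eq_of_adj_of_outDeg_eq_one h.2.1 (ha ▸ hab) hc
      simpa [Function.onFun, f, ha, hb] using
        ReflTransGen.single ((hadj p b).mpr (Or.inr ⟨rfl, rfl⟩))
    · obtain rfl := eq_of_adj_of_inDeg_eq_one h.1 (hb ▸ hab) hp
      simpa [Function.onFun, f, hb] using ReflTransGen.refl
    · simpa [Function.onFun, f, ha, hb] using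
        ReflTransGen.single ((hadj a b).mpr (Or.inl ⟨hab, ha, hb⟩))
  simpa [Function.onFun, f, hx, hy] using ReflTransGen.lift' f hf _ _ hxy

theorem DeleteParallel.adj_eq (h : G.DeleteParallel G') : G'.Adj = G.Adj := by
  obtain ⟨e, he, -, hE⟩ := h
  ext a b
  simp only [Adj, hE]
  by_cases hab : (a, b) = e
  · subst hab
    rw [← Multiset.count_pos, ← Multiset.count_pos, Multiset.count_erase_self]
    omega
  · exact Multiset.mem_erase_of_ne hab

theorem SimpStep.transGen_of_adj (h : G.SimpStep G') {a b : α} (hab : G'.Adj a b) :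
    TransGen G.Adj a b := by
  rcases h with ⟨w, hs⟩ | hd
  · exact hs.transGen_of_adj hab
  · exact .single (hd.adj_eq ▸ hab)

theorem SimpStep.not_transGen_adj_self (h : G.SimpStep G') (hG : ∀ a, ¬ TransGen G.Adj a a)
    (a : α) : ¬ TransGen G'.Adj a a :=
  fun ha => hG a (TransGen.lift' id (fun _ _ => h.transGen_of_adj) _ _ ha)

theorem SimpStep.not_adj (h : G.SimpStep G') {ℓ : α} (hℓ : ∀ x, ¬ G.Adj ℓ x) (x : α) :
    ¬ G'.Adj ℓ x := fun hx =>
  let ⟨_, hy, _⟩ := TransGen.head'_iff.mp (h.transGen_of_adj hx)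
  hℓ _ hy

theorem Suppress.exists_adj_reflTransGen_iff (h : G.Suppress w G') (hw : ¬ G.Adj w w)
    {v a : α} (hv : v ≠ w) (ha : G.Adj v a) :
    ∃ a', G'.Adj v a' ∧ ∀ t ≠ w, (ReflTransGen G'.Adj a' t ↔ ReflTransGen G.Adj a t) := by
  obtain ⟨p, c, hp, hc, hadj⟩ := h.exists_adj_iff
  by_cases haw : a = w
  · subst haw
    have hca : c ≠ a := fun hca => hw (hca ▸ hc)
    refine ⟨c, (hadj v c).mpr (Or.inr ⟨eq_of_adj_of_inDeg_eq_one h.1 ha hp, rfl⟩),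
      fun t ht => ⟨fun hct => .head hc (h.reflTransGen_of_reflTransGen hct), fun hat => ?_⟩⟩
    rcases hat.cases_head with rfl | ⟨z, haz, hzt⟩
    · exact absurd rfl ht
    · obtain rfl := eq_of_adj_of_outDeg_eq_one h.2.1 haz hc
      exact h.reflTransGen_of_ne hw hca ht hzt
  · exact ⟨a, (hadj v a).mpr (Or.inl ⟨ha, hv, haw⟩),
      fun t ht => ⟨h.reflTransGen_of_reflTransGen, h.reflTransGen_of_ne hw haw ht⟩⟩

theorem SimpStep.forksTo (h : G.SimpStep G') (hloop : ∀ a, ¬ G.Adj a a) {v ℓ₁ ℓ₂ : α}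
    (hℓ₁ : ∀ x, ¬ G.Adj ℓ₁ x) (hℓ₂ : ∀ x, ¬ G.Adj ℓ₂ x) (hf : G.ForksTo v ℓ₁ ℓ₂) :
    G'.ForksTo v ℓ₁ ℓ₂ := by
  rcases h with ⟨w, hs⟩ | hd
  · have hvw : v ≠ w := fun hvw => hf.outDeg_ne_one (hvw ▸ hs.2.1)
    obtain ⟨-, c, -, hc, -⟩ := hs.exists_adj_iff
    have hℓ₁w : ℓ₁ ≠ w := fun h => hℓ₁ c (h ▸ hc)
    have hℓ₂w : ℓ₂ ≠ w := fun h => hℓ₂ c (h ▸ hc)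
    obtain ⟨a₁, a₂, h₁, h₂, hr₁, hr₂, hn⟩ := hf
    obtain ⟨a₁', h₁', e₁⟩ := hs.exists_adj_reflTransGen_iff (hloop w) hvw h₁
    obtain ⟨a₂', h₂', e₂⟩ := hs.exists_adj_reflTransGen_iff (hloop w) hvw h₂
    exact ⟨a₁', a₂', h₁', h₂', (e₁ ℓ₁ hℓ₁w).mpr hr₁, (e₂ ℓ₂ hℓ₂w).mpr hr₂,
      fun h => hn ((e₁ ℓ₂ hℓ₂w).mp h)⟩
  · rwa [ForksTo, hd.adj_eq]

theorem SimpStep.mem_V (h : G.SimpStep G') {v ℓ₁ ℓ₂ : α} (hf : G.ForksTo v ℓ₁ ℓ₂)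
    (hv : v ∈ G.V) : v ∈ G'.V := by
  rcases h with ⟨w, -, hout, -, -, -, -, hV, -⟩ | ⟨-, -, hV, -⟩
  · rw [hV]
    exact Finset.mem_erase.mpr ⟨fun hvw => hf.outDeg_ne_one (hvw ▸ hout), hv⟩
  · rwa [hV]

theorem ForksTo.mem_V_of_reflTransGen {H : Digraph' α} {v ℓ₁ ℓ₂ : α}
    (hGH : ReflTransGen SimpStep G H) (hacyc : ∀ a, ¬ TransGen G.Adj a a)
    (hℓ₁ : ∀ x, ¬ G.Adj ℓ₁ x) (hℓ₂ : ∀ x, ¬ G.Adj ℓ₂ x) (hf : G.ForksTo v ℓ₁ ℓ₂)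
    (hv : v ∈ G.V) : v ∈ H.V := by
  suffices (∀ a, ¬ TransGen H.Adj a a) ∧ (∀ x, ¬ H.Adj ℓ₁ x) ∧ (∀ x, ¬ H.Adj ℓ₂ x) ∧
      H.ForksTo v ℓ₁ ℓ₂ ∧ v ∈ H.V from this.2.2.2.2
  induction hGH with
  | refl => exact ⟨hacyc, hℓ₁, hℓ₂, hf, hv⟩
  | tail _ hs ih =>
    obtain ⟨hacyc, hℓ₁, hℓ₂, hf, hv⟩ := ih
    exact ⟨hs.not_transGen_adj_self hacyc, hs.not_adj hℓ₁, hs.not_adj hℓ₂,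
      hs.forksTo (fun a ha => hacyc a (.single ha)) hℓ₁ hℓ₂ hf, hs.mem_V hf hv⟩

end Simplification

end Digraph'

namespace PhyloNet

variable {α : Type*} (N : PhyloNet α)

theorem not_transGen_adj_self (a : α) : ¬ TransGen N.G.Adj a a := by
  intro h
  obtain ⟨b, hab, hba⟩ := TransGen.head'_iff.mp h
  exact N.acyclic (a, b) hab
    (N.G.reaches_of_reflTransGen (fun e he => (N.wf e he).2) (N.wf _ hab).2 hba)

theorem not_adj_of_mem_X {x y : α} (hx : x ∈ N.X) : ¬ N.G.Adj x y := by
  intro hxy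
  rcases N.binary with ⟨-, hE, -⟩ | ⟨-, -, hX, -, -⟩
  · simp [Digraph'.Adj, hE] at hxy
  · exact Multiset.filter_eq_nil.mp (Multiset.card_eq_zero.mp (hX x hx).2.2) _ hxy rfl

end PhyloNet

theorem tree_vertex_mem_exhibited_general
    {α : Type*} [DecidableEq α] (N : PhyloNet α) (A : Finset α)
    (hA : A ⊆ N.X) (v c1 c2 : α)
    (hc1 : (v, c1) ∈ N.G.E) (hc2 : (v, c2) ∈ N.G.E)
    (ℓ1 ℓ2 : α) (h1 : ℓ1 ∈ A) (h2 : ℓ2 ∈ A)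
    (hd1 : N.G.Reaches c1 ℓ1) (hd2 : N.G.Reaches c2 ℓ2)
    (hnd : ¬ N.G.Reaches c1 ℓ2)
    (H : Digraph' α) (hH : N.Exhibits A H) :
    v ∈ H.V := by
  obtain ⟨r, ⟨hr, -⟩, hsimp, -⟩ := hH
  have hwf : ∀ e ∈ N.G.E, e.2 ∈ N.G.V := fun e he => (N.wf e he).2
  have hnd' : ¬ ReflTransGen N.G.Adj c1 ℓ2 :=
    fun h => hnd (N.G.reaches_of_reflTransGen hwf (hwf _ hc1) h)
  obtain ⟨q1, hq1⟩ := hd1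
  obtain ⟨q2, hq2⟩ := hd2
  obtain ⟨p, hp⟩ := hr.exists_pathFrom (N.reach v (N.wf _ hc1).1) hc1 h1 ⟨q1, hq1⟩ h2
    (N.reach ℓ2 hq2.mem_V_right) hnd'
  obtain ⟨hvc1, hc1ℓ1⟩ := hp.adj_pathGraph hc1 hq1 h1
  obtain ⟨hvc2, hc2ℓ2⟩ := hp.adj_pathGraph hc2 hq2 h2
  have hsub := Digraph'.pathGraph_adj_le (G := N.G) (r := r) (A := A)
  refine Digraph'.ForksTo.mem_V_of_reflTransGen hsimp
    (fun a h => N.not_transGen_adj_self a (TransGen.mono hsub _ _ h))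
    (fun x h => N.not_adj_of_mem_X (hA h1) (hsub _ _ h))
    (fun x h => N.not_adj_of_mem_X (hA h2) (hsub _ _ h))
    ⟨c1, c2, hvc1, hvc2, hc1ℓ1, hc2ℓ2, fun h => hnd' (ReflTransGen.mono hsub _ _ h)⟩ ?_
  exact (hp.append hq1 hc1).mem_pathGraph_V h1
    (List.mem_append_left _ (List.mem_of_getLast? hp.2.2))

/-- a tree vertex `v` with children `c1, c2` such that some
`ℓ1 ∈ A` is a descendant of `c1`, some `ℓ2 ∈ A` is a descendant of `c2`,
and `ℓ2` is not a descendant of `c1`, is a vertex of `N_A`. -/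
theorem tree_vertex_mem_exhibited
    {α : Type*} [DecidableEq α] (N : PhyloNet α) (A : Finset α)
    (hA : A ⊆ N.X) (v c1 c2 : α)
    (htree : N.G.inDeg v = 1 ∧ N.G.outDeg v = 2)
    (hc1 : (v, c1) ∈ N.G.E) (hc2 : (v, c2) ∈ N.G.E) (hcc : c1 ≠ c2)
    (ℓ1 ℓ2 : α) (h1 : ℓ1 ∈ A) (h2 : ℓ2 ∈ A)
    (hd1 : N.G.Reaches c1 ℓ1) (hd2 : N.G.Reaches c2 ℓ2)
    (hnd : ¬ N.G.Reaches c1 ℓ2)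
    (H : Digraph' α) (hH : N.Exhibits A H) :
    v ∈ H.V :=
  tree_vertex_mem_exhibited_general N A hA v c1 c2 hc1 hc2 ℓ1 ℓ2 h1 h2 hd1 hd2 hnd H hH
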